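/- Let 𝒳 ⊂ ℝ^{n_x} be a compact set of positive Lebesgue measure, q₀ a continuous probability density on 𝒳, q a continuous Markov kernel density on 𝒳 × 𝒳, K ∈ ℕ a horizon, and T the induced trajectory density on 𝒮 = 𝒳^{K+1}. Define the backward value functions 𝒱_K(x) = 0 for all x ∈ 𝒳 and, for k = K−1, …, 0, 𝒱_k(x) = ∫_𝒳 q(x, x′) log(q(x, x′) λ(𝒳)) dx′ + ∫_𝒳 q(x, x′) 𝒱_{k+1}(x′) dx′. Then KL(T‖U) = ∫_𝒳 q₀(x) log(q₀(x) λ(𝒳)) dx + ∫_𝒳 q₀(x) 𝒱_0(x) dx. -/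

import Mathlib

/-!
Split a trajectory as `s = (x₀, t)`. The trajectory density factors as `q₀(x₀) · T'(t)`, where
`T'` is the density of the chain of horizon `K - 1` started from `q(x₀, ·)`, so
`log (T λ^(K+1)) = log (q₀(x₀) λ) + log (T' λ^K)`. Integrating out `t` by Fubini, the first term
only sees the total mass `1` of `T'`, and by induction on `K` (with initial density `q(x₀, ·)`)
the second term integrates to the recursion for `𝒱₀(x₀)`.
-/

open MeasureTheory Real Finset

noncomputable section

namespace Real

theorem continuous_mul_log_mul_const (c : ℝ) : Continuous fun x : ℝ => x * log (x * c) := by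
  rcases eq_or_ne c 0 with rfl | hc
  · simpa using continuous_const
  have h : (fun x : ℝ => x * log (x * c)) = fun x => c⁻¹ * ((x * c) * log (x * c)) := by
    funext x
    field_simp
  rw [h]
  exact continuous_const.mul (continuous_mul_log.comp (continuous_mul_const c))

theorem mul_log_mul_pow_succ (a b : ℝ) {c : ℝ} (hc : c ≠ 0) (m : ℕ) :
    (a * b) * log (a * b * c ^ (m + 1)) = a * log (a * c) * b + a * (b * log (b * c ^ m)) := by
  rcases eq_or_ne a 0 with rfl | ha
  · simp
  rcases eq_or_ne b 0 with rfl | hb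
  · simp
  rw [pow_succ, show a * b * (c ^ m * c) = (a * c) * (b * c ^ m) by ring,
    log_mul (mul_ne_zero ha hc) (mul_ne_zero hb (pow_ne_zero _ hc))]
  ring

end Real

theorem ContinuousOn.comp_apply_univ_pi {α β ι : Type*} [TopologicalSpace α]
    [TopologicalSpace β] {f : α → β} {X : Set α} (hf : ContinuousOn f X) (i : ι) :
    ContinuousOn (fun s : ι → α => f (s i)) (Set.univ.pi fun _ => X) :=
  hf.comp (continuousOn_apply i _) fun _ hs => Set.mem_univ_pi.1 hs i

namespace MeasureTheory

variable {α E : Type*} [NormedAddCommGroup E] [NormedSpace ℝ E]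

theorem setIntegral_univ_pi_fin_one [MeasureSpace α] (X : Set α) (g : α → E) :
    ∫ s in Set.univ.pi (fun _ : Fin 1 => X), g (s 0) = ∫ x in X, g x := by
  have hpre : Set.univ.pi (fun _ : Fin 1 => X) = MeasurableEquiv.funUnique (Fin 1) α ⁻¹' X := by
    ext s
    simp [Fin.forall_fin_one]
  rw [hpre, ← (volume_preserving_funUnique (Fin 1) α).setIntegral_preimage_emb
    (MeasurableEquiv.measurableEmbedding _)]
  rfl

theorem setIntegral_univ_pi_fin_succ [MeasureSpace α] [SigmaFinite (volume : Measure α)]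
    {n : ℕ} {X : Set α} {g : (Fin (n + 1) → α) → E}
    (hg : IntegrableOn g (Set.univ.pi fun _ => X)) :
    ∫ s in Set.univ.pi (fun _ => X), g s =
      ∫ x in X, ∫ t in Set.univ.pi (fun _ => X), g (Fin.cons x t) := by
  set e := (MeasurableEquiv.piFinSuccAbove (fun _ : Fin (n + 1) => α) 0).symm
  have he : MeasurePreserving e := (volume_preserving_piFinSuccAbove (fun _ => α) 0).symm
  have hcons : ∀ p, e p = Fin.cons p.1 p.2 := fun p => by
    simp [e, MeasurableEquiv.piFinSuccAbove_symm_apply, Fin.insertNthEquiv, Fin.insertNth_zero']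
  have hpre : e ⁻¹' Set.univ.pi (fun _ => X) = X ×ˢ Set.univ.pi (fun _ => X) := by
    ext p
    simp [hcons, Fin.forall_fin_succ]
  rw [← he.integrableOn_comp_preimage e.measurableEmbedding, hpre, Measure.volume_eq_prod] at hg
  rw [← he.setIntegral_preimage_emb e.measurableEmbedding, hpre, Measure.volume_eq_prod]
  exact (setIntegral_prod (g ∘ e) hg).trans (by simp only [Function.comp_apply, hcons])

end MeasureTheory

section MarkovChain

variable {α : Type*}

def pathWeight (q : α → α → ℝ) (K : ℕ) (s : Fin (K + 1) → α) : ℝ :=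
  ∏ k : Fin K, q (s k.castSucc) (s k.succ)

theorem pathWeight_zero (q : α → α → ℝ) (s : Fin 1 → α) : pathWeight q 0 s = 1 :=
  Finset.prod_empty

theorem pathWeight_cons (q : α → α → ℝ) (K : ℕ) (x : α) (t : Fin (K + 1) → α) :
    pathWeight q (K + 1) (Fin.cons x t) = q x (t 0) * pathWeight q K t := by
  simp [pathWeight, Fin.prod_univ_succ]

theorem continuousOn_pathWeight [TopologicalSpace α] {q : α → α → ℝ} {X : Set α}
    (hq : ContinuousOn (Function.uncurry q) (X ×ˢ X)) (K : ℕ) :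
    ContinuousOn (pathWeight q K) (Set.univ.pi fun _ => X) :=
  continuousOn_finsetProd _ fun k _ =>
    hq.comp (f := fun s : Fin (K + 1) → α => (s k.castSucc, s k.succ)) ((continuousOn_apply _ _).prodMk (continuousOn_apply _ _))
      fun _ hs => ⟨Set.mem_univ_pi.1 hs _, Set.mem_univ_pi.1 hs _⟩

variable [TopologicalSpace α] [T2Space α] [SecondCountableTopology α] [MeasureSpace α]
  [OpensMeasurableSpace α] [SigmaFinite (volume : Measure α)]
  [IsFiniteMeasureOnCompacts (volume : Measure α)]
  {X : Set α} {q : α → α → ℝ}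

theorem setIntegral_mul_pathWeight (hX : IsCompact X)
    (hq : ContinuousOn (Function.uncurry q) (X ×ˢ X)) (hq1 : ∀ x ∈ X, ∫ x' in X, q x x' = 1)
    (K : ℕ) {p : α → ℝ} (hp : ContinuousOn p X) (hp1 : ∫ x in X, p x = 1) :
    ∫ s in Set.univ.pi (fun _ => X), p (s 0) * pathWeight q K s = 1 := by
  induction K generalizing p with
  | zero => simpa [pathWeight_zero, setIntegral_univ_pi_fin_one X p] using hp1
  | succ K ih =>
    have hint : IntegrableOn (fun s => p (s 0) * pathWeight q (K + 1) s)
        (Set.univ.pi fun _ => X) :=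
      ((hp.comp_apply_univ_pi 0).mul (continuousOn_pathWeight hq _)).integrableOn_compact
        (isCompact_univ_pi fun _ => hX)
    rw [setIntegral_univ_pi_fin_succ hint, ← hp1]
    refine setIntegral_congr_fun hX.measurableSet fun x hx => ?_
    simp only [Fin.cons_zero, pathWeight_cons]
    rw [integral_const_mul, ih (hq.uncurry_left x hx) (hq1 x hx), mul_one]

theorem setIntegral_mul_pathWeight_mul_log (hX : IsCompact X)
    (hq : ContinuousOn (Function.uncurry q) (X ×ˢ X)) (hq1 : ∀ x ∈ X, ∫ x' in X, q x x' = 1)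
    {c : ℝ} (hc : c ≠ 0) (K : ℕ) {p : α → ℝ} (hp : ContinuousOn p X) (𝒱 : ℕ → α → ℝ)
    (h𝒱K : ∀ x ∈ X, 𝒱 K x = 0)
    (h𝒱rec : ∀ k, k < K → ∀ x ∈ X, 𝒱 k x =
      (∫ x' in X, q x x' * log (q x x' * c)) + ∫ x' in X, q x x' * 𝒱 (k + 1) x') :
    ∫ s in Set.univ.pi (fun _ => X),
        (p (s 0) * pathWeight q K s) * log (p (s 0) * pathWeight q K s * c ^ (K + 1)) =
      (∫ x in X, p x * log (p x * c)) + ∫ x in X, p x * 𝒱 0 x := by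
  induction K generalizing p 𝒱 with
  | zero =>
    have hzero : ∫ x in X, p x * 𝒱 0 x = 0 := by
      rw [setIntegral_congr_fun hX.measurableSet fun x hx => by rw [h𝒱K x hx, mul_zero],
        integral_zero]
    simp only [pathWeight_zero, mul_one, zero_add, pow_one, hzero, add_zero]
    exact setIntegral_univ_pi_fin_one X fun x => p x * log (p x * c)
  | succ K ih =>
    have hXpi : IsCompact (Set.univ.pi fun _ : Fin (K + 2) => X) := isCompact_univ_pi fun _ => hX
    have hp0 := hp.comp_apply_univ_pi (0 : Fin (K + 2))
    have hW := continuousOn_pathWeight hq (K + 1)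
    have hfirst : IntegrableOn (fun s => p (s 0) * log (p (s 0) * c) * pathWeight q (K + 1) s)
        (Set.univ.pi fun _ => X) :=
      (((continuous_mul_log_mul_const c).comp_continuousOn hp0).mul hW).integrableOn_compact hXpi
    have hsecond : IntegrableOn (fun s => p (s 0) *
        (pathWeight q (K + 1) s * log (pathWeight q (K + 1) s * c ^ (K + 1))))
        (Set.univ.pi fun _ => X) :=
      (hp0.mul ((continuous_mul_log_mul_const _).comp_continuousOn hW)).integrableOn_compact hXpi
    simp only [mul_log_mul_pow_succ _ _ hc]
    rw [integral_add hfirst hsecond, setIntegral_univ_pi_fin_succ hfirst,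
      setIntegral_univ_pi_fin_succ hsecond]
    congr 1 <;> refine setIntegral_congr_fun hX.measurableSet fun x hx => ?_ <;>
      simp only [Fin.cons_zero, pathWeight_cons] <;> rw [integral_const_mul]
    · rw [setIntegral_mul_pathWeight hX hq hq1 K (hq.uncurry_left x hx) (hq1 x hx), mul_one]
    · rw [ih (hq.uncurry_left x hx) (fun k => 𝒱 (k + 1)) h𝒱K
        (fun k hk => h𝒱rec (k + 1) (by omega)), h𝒱rec 0 (by omega) x hx]

end MarkovChain

theorem continuous_kl_recursion_general
    (nx K : ℕ)
    (𝒳 : Set (Fin nx → ℝ))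
    (hcomp : IsCompact 𝒳) (hpos : 0 < volume 𝒳)
    (q0 : (Fin nx → ℝ) → ℝ) (q : (Fin nx → ℝ) → (Fin nx → ℝ) → ℝ)
    (hq0cont : ContinuousOn q0 𝒳)
    (hqcont : ContinuousOn (fun z : (Fin nx → ℝ) × (Fin nx → ℝ) => q z.1 z.2) (𝒳 ×ˢ 𝒳))
    (hqint : ∀ x ∈ 𝒳, (∫ x' in 𝒳, q x x') = 1)
    -- backward value functions
    (𝒱 : ℕ → (Fin nx → ℝ) → ℝ)
    (h𝒱K : ∀ x ∈ 𝒳, 𝒱 K x = 0)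
    (h𝒱rec : ∀ k, k < K → ∀ x ∈ 𝒳, 𝒱 k x =
        (∫ x' in 𝒳, q x x' * Real.log (q x x' * (volume 𝒳).toReal))
        + ∫ x' in 𝒳, q x x' * 𝒱 (k + 1) x')
    -- trajectory density and trajectory space
    (T : (Fin (K + 1) → Fin nx → ℝ) → ℝ)
    (hT : ∀ s, T s = q0 (s 0) * ∏ k : Fin K, q (s k.castSucc) (s k.succ))
    (𝒮 : Set (Fin (K + 1) → Fin nx → ℝ))
    (h𝒮 : 𝒮 = Set.univ.pi fun _ => 𝒳) :
    (∫ s in 𝒮, T s * Real.log (T s * (volume 𝒳).toReal ^ (K + 1)))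
      = (∫ x in 𝒳, q0 x * Real.log (q0 x * (volume 𝒳).toReal))
        + ∫ x in 𝒳, q0 x * 𝒱 0 x := by
  have hvol : (volume 𝒳).toReal ≠ 0 :=
    (ENNReal.toReal_pos hpos.ne' hcomp.measure_lt_top.ne).ne'
  subst h𝒮
  simp only [hT]
  exact setIntegral_mul_pathWeight_mul_log hcomp hqcont hqint hvol K hq0cont 𝒱 h𝒱K h𝒱rec

/-- Continuous KL divergence to uniform recursivity, Lemma
`recursive_continuous_KL_to_uniform`: `KL(T‖U) = φ(q₀, 𝒱₀)` for the continuous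
backward value recursion `𝒱_k`. -/
theorem continuous_kl_recursion
    (nx K : ℕ)
    (𝒳 : Set (Fin nx → ℝ))
    (hcomp : IsCompact 𝒳) (hpos : 0 < volume 𝒳)
    (q0 : (Fin nx → ℝ) → ℝ) (q : (Fin nx → ℝ) → (Fin nx → ℝ) → ℝ)
    (hq0cont : ContinuousOn q0 𝒳)
    (hq0nonneg : ∀ x ∈ 𝒳, 0 ≤ q0 x)
    (hq0int : (∫ x in 𝒳, q0 x) = 1)
    (hqcont : ContinuousOn (fun z : (Fin nx → ℝ) × (Fin nx → ℝ) => q z.1 z.2) (𝒳 ×ˢ 𝒳))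
    (hqnonneg : ∀ x ∈ 𝒳, ∀ x' ∈ 𝒳, 0 ≤ q x x')
    (hqint : ∀ x ∈ 𝒳, (∫ x' in 𝒳, q x x') = 1)
    -- backward value functions
    (𝒱 : ℕ → (Fin nx → ℝ) → ℝ)
    (h𝒱K : ∀ x ∈ 𝒳, 𝒱 K x = 0)
    (h𝒱rec : ∀ k, k < K → ∀ x ∈ 𝒳, 𝒱 k x =
        (∫ x' in 𝒳, q x x' * Real.log (q x x' * (volume 𝒳).toReal))
        + ∫ x' in 𝒳, q x x' * 𝒱 (k + 1) x')
    -- trajectory density and trajectory space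
    (T : (Fin (K + 1) → Fin nx → ℝ) → ℝ)
    (hT : ∀ s, T s = q0 (s 0) * ∏ k : Fin K, q (s k.castSucc) (s k.succ))
    (𝒮 : Set (Fin (K + 1) → Fin nx → ℝ))
    (h𝒮 : 𝒮 = Set.univ.pi fun _ => 𝒳) :
    (∫ s in 𝒮, T s * Real.log (T s * (volume 𝒳).toReal ^ (K + 1)))
      = (∫ x in 𝒳, q0 x * Real.log (q0 x * (volume 𝒳).toReal))
        + ∫ x in 𝒳, q0 x * 𝒱 0 x :=
  continuous_kl_recursion_general nx K 𝒳 hcomp hpos q0 q hq0cont hqcont hqint 𝒱 h𝒱K h𝒱rec T hT 𝒮 h𝒮
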